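/- Let u : ℝ³ → ℂ be smooth and satisfy the submodel equations □u = 0 and ⟨∂u,∂u⟩ = 0. Fix integers j ≥ m ≥ 1, let J_μ^{(j,m)} = √((j+m)!/(j(j+1)(j−m)!)) · (−iu)^{m−1}/(1+|u|²)^{j+1} · ( Σ_{n=0}^{j−m} α_n^{(j,m)} |u|^{2n} ∂_μu + (−1)^{j−m} Σ_{n=0}^{j−m} α_{j−m−n}^{(j,m)} |u|^{2n} u² ∂_μū ) with α_n^{(j,m)} = (−1)^n (n!/(m+n−1)!) C(j−m,n) C(j+1,n), and define J_μ^{(j,−m)} = (−1)^m · conj(J_μ^{(j,m)}). Then (J₀^{(j,−m)}, J₁^{(j,−m)}, J₂^{(j,−m)}) is a conserved current, i.e. ∂₀J₀^{(j,−m)} − ∂₁J₁^{(j,−m)} − ∂₂J₂^{(j,−m)} = 0 on ℝ³. -/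

import Mathlib

open Complex ComplexConjugate Finset Nat

/-- Partial derivative in direction `μ` of a complex-valued function on `ℝ³`. -/
noncomputable def pd (μ : Fin 3) (f : (Fin 3 → ℝ) → ℂ) (x : Fin 3 → ℝ) : ℂ :=
  fderiv ℝ f x (Pi.single μ 1)

/-- The d'Alembertian `□u = ∂₀∂₀u − ∂₁∂₁u − ∂₂∂₂u` for the metric `diag(1,−1,−1)`. -/
noncomputable def dalembert (u : (Fin 3 → ℝ) → ℂ) (x : Fin 3 → ℝ) : ℂ :=
  pd 0 (pd 0 u) x - pd 1 (pd 1 u) x - pd 2 (pd 2 u) x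

/-- Minkowski product of gradients `⟨∂f,∂g⟩ = ∂₀f·∂₀g − ∂₁f·∂₁g − ∂₂f·∂₂g`. -/
noncomputable def minkGrad (f g : (Fin 3 → ℝ) → ℂ) (x : Fin 3 → ℝ) : ℂ :=
  pd 0 f x * pd 0 g x - pd 1 f x * pd 1 g x - pd 2 f x * pd 2 g x

/-- `(J₀,J₁,J₂)` is a conserved current if `∂₀J₀ − ∂₁J₁ − ∂₂J₂ = 0` identically. -/
def IsConservedCurrent (J : Fin 3 → (Fin 3 → ℝ) → ℂ) : Prop :=
  ∀ x, pd 0 (J 0) x - pd 1 (J 1) x - pd 2 (J 2) x = 0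

/-- The coefficient `α_n^{(j,m)} = (−1)^n (n!/(m+n−1)!) C(j−m,n) C(j+1,n)`. -/
noncomputable def alphaCoeff (j m n : ℕ) : ℂ :=
  (-1) ^ n * ((n ! : ℂ) / ((m + n - 1)! : ℂ)) *
    (Nat.choose (j - m) n : ℂ) * (Nat.choose (j + 1) n : ℂ)

/-- The current `J_μ^{(j,m)}` of the `CP¹` submodel, for `j ≥ m ≥ 1`. -/
noncomputable def Jjm (u : (Fin 3 → ℝ) → ℂ) (j m : ℕ) (μ : Fin 3) (x : Fin 3 → ℝ) : ℂ :=
  (Real.sqrt (((j + m)! : ℝ) / ((j : ℝ) * ((j : ℝ) + 1) * ((j - m)! : ℝ))) : ℂ) *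
    (-Complex.I * u x) ^ (m - 1) / (1 + u x * conj (u x)) ^ (j + 1) *
    ((∑ n ∈ Finset.range (j - m + 1),
        alphaCoeff j m n * (u x * conj (u x)) ^ n * pd μ u x)
      + (-1) ^ (j - m) *
        ∑ n ∈ Finset.range (j - m + 1),
          alphaCoeff j m (j - m - n) * (u x * conj (u x)) ^ n * (u x) ^ 2 *
            pd μ (fun y => conj (u y)) x)

section pdAPI

variable {f g : (Fin 3 → ℝ) → ℂ} {x : Fin 3 → ℝ} {μ : Fin 3}

lemma pd_const (c : ℂ) : pd μ (fun _ => c) x = 0 := by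
  simp [pd]

lemma pd_add (hf : DifferentiableAt ℝ f x) (hg : DifferentiableAt ℝ g x) :
    pd μ (fun y => f y + g y) x = pd μ f x + pd μ g x := by
  simp [pd, fderiv_fun_add hf hg]

lemma pd_mul (hf : DifferentiableAt ℝ f x) (hg : DifferentiableAt ℝ g x) :
    pd μ (fun y => f y * g y) x = pd μ f x * g x + f x * pd μ g x := by
  simp [pd, fderiv_fun_mul hf hg]; ring

lemma pd_sum {ι : Type*} (t : Finset ι) (F : ι → (Fin 3 → ℝ) → ℂ)
    (hF : ∀ i ∈ t, DifferentiableAt ℝ (F i) x) :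
    pd μ (fun y => ∑ i ∈ t, F i y) x = ∑ i ∈ t, pd μ (F i) x := by
  simp [pd, fderiv_fun_sum hF]

lemma pd_conj (hf : DifferentiableAt ℝ f x) :
    pd μ (fun y => conj (f y)) x = conj (pd μ f x) := by
  have : (fun y => conj (f y)) = (Complex.conjCLE : ℂ → ℂ) ∘ f := rfl
  rw [pd, this, Complex.conjCLE.comp_fderiv]
  rfl

lemma pd_comp (h : ℂ → ℂ) (hh : DifferentiableAt ℂ h (f x)) (hf : DifferentiableAt ℝ f x) :
    pd μ (fun y => h (f y)) x = deriv h (f x) * pd μ f x := by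
  have h1 : HasFDerivAt h (ContinuousLinearMap.restrictScalars ℝ (fderiv ℂ h (f x))) (f x) :=
    (hh.hasFDerivAt).restrictScalars ℝ
  have h2 : HasFDerivAt (fun y => h (f y))
      ((ContinuousLinearMap.restrictScalars ℝ (fderiv ℂ h (f x))).comp (fderiv ℝ f x)) x :=
    h1.comp x hf.hasFDerivAt
  rw [pd, h2.fderiv]
  simp only [ContinuousLinearMap.coe_comp', Function.comp_apply,
    ContinuousLinearMap.coe_restrictScalars']
  rw [show fderiv ℂ h (f x) = ContinuousLinearMap.smulRight (1 : ℂ →L[ℂ] ℂ) (deriv h (f x)) from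
    (hh.hasDerivAt.hasFDerivAt).fderiv]
  simp [pd, mul_comm]

lemma pd_inv (hf : DifferentiableAt ℝ f x) (h0 : f x ≠ 0) :
    pd μ (fun y => (f y)⁻¹) x = -pd μ f x / (f x) ^ 2 := by
  rw [pd_comp (fun z => z⁻¹) (differentiableAt_inv h0) hf]
  rw [deriv_inv]
  field_simp

end pdAPI

/-- `f` is differentiable with chain-rule decomposition `∂f = a ∂u + b ∂ū`. -/
def HasPD (u f a b : (Fin 3 → ℝ) → ℂ) : Prop :=
  Differentiable ℝ f ∧
    ∀ (μ : Fin 3) (x : Fin 3 → ℝ),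
      pd μ f x = a x * pd μ u x + b x * pd μ (fun y => conj (u y)) x

section HasPDAPI

variable {u f g a b a' b' : (Fin 3 → ℝ) → ℂ}

lemma Differentiable.conj_comp (hu : Differentiable ℝ u) :
    Differentiable ℝ (fun y => conj (u y)) :=
  fun x => (Complex.conjCLE.differentiableAt).comp x (hu x)

lemma HasPD.diff (h : HasPD u f a b) : Differentiable ℝ f := h.1

lemma hasPD_const (c : ℂ) : HasPD u (fun _ => c) (fun _ => 0) (fun _ => 0) := by
  refine ⟨differentiable_const c, fun μ x => ?_⟩
  simp [pd_const]

lemma hasPD_self (hu : Differentiable ℝ u) : HasPD u u (fun _ => 1) (fun _ => 0) := by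
  refine ⟨hu, fun μ x => ?_⟩
  simp

lemma hasPD_conj (hu : Differentiable ℝ u) :
    HasPD u (fun y => conj (u y)) (fun _ => 0) (fun _ => 1) := by
  refine ⟨hu.conj_comp, fun μ x => ?_⟩
  simp

lemma HasPD.add (hf : HasPD u f a b) (hg : HasPD u g a' b') :
    HasPD u (fun y => f y + g y) (fun y => a y + a' y) (fun y => b y + b' y) := by
  refine ⟨hf.1.add hg.1, fun μ x => ?_⟩
  rw [pd_add (hf.1 x) (hg.1 x), hf.2 μ x, hg.2 μ x]
  ring

lemma HasPD.mul (hf : HasPD u f a b) (hg : HasPD u g a' b') :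
    HasPD u (fun y => f y * g y) (fun y => a y * g y + f y * a' y)
      (fun y => b y * g y + f y * b' y) := by
  refine ⟨hf.1.mul hg.1, fun μ x => ?_⟩
  rw [pd_mul (hf.1 x) (hg.1 x), hf.2 μ x, hg.2 μ x]
  ring

lemma HasPD.const_mul (hf : HasPD u f a b) (c : ℂ) :
    HasPD u (fun y => c * f y) (fun y => c * a y) (fun y => c * b y) := by
  have := (hasPD_const (u := u) c).mul hf
  refine ⟨this.1, fun μ x => ?_⟩
  rw [this.2 μ x]
  ring

lemma HasPD.congr_ab (hf : HasPD u f a b) (ha : ∀ y, a y = a' y) (hb : ∀ y, b y = b' y) :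
    HasPD u f a' b' := by
  refine ⟨hf.1, fun μ x => ?_⟩
  rw [hf.2 μ x, ha, hb]

lemma HasPD.congr_fun (hf : HasPD u f a b) {f' : (Fin 3 → ℝ) → ℂ} (h : ∀ y, f y = f' y) :
    HasPD u f' a b := by
  have : f = f' := funext h
  exact this ▸ hf

lemma HasPD.pow (hf : HasPD u f a b) (k : ℕ) :
    HasPD u (fun y => f y ^ k) (fun y => (k : ℂ) * f y ^ (k - 1) * a y)
      (fun y => (k : ℂ) * f y ^ (k - 1) * b y) := by
  induction k with
  | zero =>
      exact (hasPD_const 1).congr_ab (by intro y; simp) (by intro y; simp)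
        |>.congr_fun (by intro y; simp)
  | succ n ih =>
      have h2 := ih.mul hf
      refine h2.congr_fun (by intro y; rw [← pow_succ]) |>.congr_ab ?_ ?_ <;> intro y
      · rcases Nat.eq_zero_or_pos n with h | h
        · subst h; push_cast; norm_num
        · have hp : f y ^ (n - 1) * f y = f y ^ n := by
            rw [← pow_succ, Nat.sub_add_cancel h]
          push_cast
          calc (n : ℂ) * f y ^ (n - 1) * a y * f y + f y ^ n * a y
              = (n : ℂ) * (f y ^ (n - 1) * f y) * a y + f y ^ n * a y := by ring
            _ = ((n : ℂ) + 1) * f y ^ n * a y := by rw [hp]; ring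
      · rcases Nat.eq_zero_or_pos n with h | h
        · subst h; push_cast; norm_num
        · have hp : f y ^ (n - 1) * f y = f y ^ n := by
            rw [← pow_succ, Nat.sub_add_cancel h]
          push_cast
          calc (n : ℂ) * f y ^ (n - 1) * b y * f y + f y ^ n * b y
              = (n : ℂ) * (f y ^ (n - 1) * f y) * b y + f y ^ n * b y := by ring
            _ = ((n : ℂ) + 1) * f y ^ n * b y := by rw [hp]; ring

lemma HasPD.inv (hf : HasPD u f a b) (h0 : ∀ y, f y ≠ 0) :
    HasPD u (fun y => (f y)⁻¹) (fun y => -a y / f y ^ 2) (fun y => -b y / f y ^ 2) := by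
  refine ⟨fun x => (differentiableAt_inv (h0 x)).comp x (hf.1 x), fun μ x => ?_⟩
  rw [pd_inv (hf.1 x) (h0 x), hf.2 μ x]
  field_simp
  ring

lemma HasPD.sum {ι : Type*} (t : Finset ι) (F A B : ι → (Fin 3 → ℝ) → ℂ)
    (hF : ∀ i ∈ t, HasPD u (F i) (A i) (B i)) :
    HasPD u (fun y => ∑ i ∈ t, F i y) (fun y => ∑ i ∈ t, A i y) (fun y => ∑ i ∈ t, B i y) := by
  constructor
  · intro x
    exact DifferentiableAt.fun_sum (fun i hi => (hF i hi).1 x)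
  · intro μ x
    rw [pd_sum t F (fun i hi => (hF i hi).1 x)]
    rw [Finset.sum_congr rfl (fun i hi => (hF i hi).2 μ x), Finset.sum_add_distrib,
      ← Finset.sum_mul, ← Finset.sum_mul]

end HasPDAPI

section Combinatorics

lemma fact_ne' (k : ℕ) : ((k ! : ℕ) : ℂ) ≠ 0 :=
  Nat.cast_ne_zero.mpr (Nat.factorial_ne_zero k)

lemma cast_choose_eq (N k : ℕ) (h : k ≤ N) :
    ((N.choose k : ℕ) : ℂ) = (N ! : ℂ) / ((k ! : ℂ) * ((N - k)! : ℂ)) := by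
  have h1 := Nat.choose_mul_factorial_mul_factorial h
  have h2 : ((N.choose k : ℕ) : ℂ) * (k ! : ℂ) * ((N - k)! : ℂ) = (N ! : ℂ) := by
    exact_mod_cast congrArg (Nat.cast : ℕ → ℂ) h1
  field_simp [fact_ne']
  rw [← h2]; field_simp [fact_ne' k, fact_ne' (N - k)]

lemma fact_step {a b : ℕ} (hab : a = b + 1) : ((a ! : ℕ) : ℂ) = (a : ℂ) * ((b ! : ℕ) : ℂ) := by
  subst hab; rw [Nat.factorial_succ]; push_cast; ring

lemma alpha_eq_zero {j m n : ℕ} (h : j - m < n) : alphaCoeff j m n = 0 := by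
  unfold alphaCoeff
  rw [Nat.choose_eq_zero_of_lt h]
  simp

lemma cast_ne_aux (k : ℕ) (h : 1 ≤ k) : ((k : ℕ) : ℂ) ≠ 0 :=
  Nat.cast_ne_zero.mpr (by omega)

lemma alpha_mul (j m k : ℕ) :
    alphaCoeff j m k * (((m + k - 1)! : ℕ) : ℂ) =
      (-1) ^ k * ((k ! : ℕ) : ℂ) * ((Nat.choose (j - m) k : ℕ) : ℂ)
        * ((Nat.choose (j + 1) k : ℕ) : ℂ) := by
  unfold alphaCoeff
  field_simp
  have h := fact_ne' (m + k - 1)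
  field_simp [h]

set_option maxHeartbeats 1000000 in
lemma alpha_rec {j m n : ℕ} (hm : 1 ≤ m) (hjm : m ≤ j) (hn : n ≤ j - m) :
    ((m : ℂ) + n) * ((n : ℂ) + 1) * alphaCoeff j m (n + 1) =
      -(((j : ℂ) - m) - n) * ((j : ℂ) + 1 - n) * alphaCoeff j m n := by
  rcases Nat.eq_or_lt_of_le hn with heq | hlt
  · -- n = j - m : both sides vanish
    have h0 : alphaCoeff j m (n + 1) = 0 := alpha_eq_zero (by omega)
    have h1 : ((j : ℂ) - m) - n = 0 := by
      have : ((j - m : ℕ) : ℂ) = n := by rw [heq.symm]  -- n = j - m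
      rw [Nat.cast_sub hjm] at this
      linear_combination this
    rw [h0, h1]
    ring
  · -- n < j - m
    have hn1 : n + 1 ≤ j - m := hlt
    have e1 := alpha_mul j m (n + 1)
    have i1 : m + (n + 1) - 1 = m + n := by omega
    rw [i1] at e1
    have e0 := alpha_mul j m n
    have hC1 : ((Nat.choose (j - m) (n + 1) : ℕ) : ℂ) * ((n : ℂ) + 1) =
        ((Nat.choose (j - m) n : ℕ) : ℂ) * (((j : ℂ) - m) - n) := by
      have h := Nat.choose_succ_right_eq (j - m) n
      have h2 : ((Nat.choose (j - m) (n + 1) : ℕ) : ℂ) * (((n : ℕ) : ℂ) + 1) =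
          ((Nat.choose (j - m) n : ℕ) : ℂ) * (((j - m - n : ℕ) : ℕ) : ℂ) := by
        exact_mod_cast h
      rw [Nat.cast_sub (show n ≤ j - m by omega), Nat.cast_sub hjm] at h2
      exact h2
    have hC2 : ((Nat.choose (j + 1) (n + 1) : ℕ) : ℂ) * ((n : ℂ) + 1) =
        ((Nat.choose (j + 1) n : ℕ) : ℂ) * ((j : ℂ) + 1 - n) := by
      have h := Nat.choose_succ_right_eq (j + 1) n
      have h2 : ((Nat.choose (j + 1) (n + 1) : ℕ) : ℂ) * (((n : ℕ) : ℂ) + 1) =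
          ((Nat.choose (j + 1) n : ℕ) : ℂ) * (((j + 1 - n : ℕ) : ℕ) : ℂ) := by
        exact_mod_cast h
      rw [Nat.cast_sub (show n ≤ j + 1 by omega)] at h2
      push_cast at h2
      exact h2
    have l1 : (((n + 1)! : ℕ) : ℂ) = ((n : ℂ) + 1) * ((n ! : ℕ) : ℂ) := by
      rw [fact_step (rfl : n + 1 = n + 1)]; push_cast; ring
    have l2 : (((m + n)! : ℕ) : ℂ) = ((m : ℂ) + n) * (((m + n - 1)! : ℕ) : ℂ) := by
      rw [fact_step (show m + n = (m + n - 1) + 1 by omega)]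
      push_cast; ring
    apply mul_right_cancel₀ (fact_ne' (m + n))
    linear_combination (((m:ℂ)+n)*((n:ℂ)+1)) * e1
      + (((m:ℂ)+n)*((n:ℂ)+1)*(-1:ℂ)^(n+1) * ((Nat.choose (j - m) (n+1) : ℕ):ℂ)
          * ((Nat.choose (j + 1) (n+1) : ℕ):ℂ)) * l1
      + (((m:ℂ)+n)*(-1:ℂ)^(n+1)*((n ! : ℕ):ℂ)*((n:ℂ)+1)*((Nat.choose (j + 1) (n+1) : ℕ):ℂ)) * hC1
      + (((m:ℂ)+n)*(-1:ℂ)^(n+1)*((n ! : ℕ):ℂ)*((Nat.choose (j - m) n : ℕ):ℂ)*(((j:ℂ)-m)-n)) * hC2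
      + ((((j:ℂ)-m)-n)*((j:ℂ)+1-n)* alphaCoeff j m n) * l2
      + ((((j:ℂ)-m)-n)*((j:ℂ)+1-n)*((m:ℂ)+n)) * e0

set_option maxHeartbeats 2000000 in
lemma alpha_sym {j m n : ℕ} (hm : 1 ≤ m) (hjm : m ≤ j) (hn : n ≤ j - m) :
    ((j : ℂ) - n) * ((j : ℂ) + 1 - n) * alphaCoeff j m n * (-1) ^ (j - m - n) =
      ((m : ℂ) + n) * ((m : ℂ) + 1 + n) * alphaCoeff j m (j - m - n) * (-1) ^ n := by
  have e0 := alpha_mul j m n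
  have eJ := alpha_mul j m (j - m - n)
  have i1 : m + (j - m - n) - 1 = j - n - 1 := by omega
  rw [i1, Nat.choose_symm hn] at eJ
  have cY1 : ((Nat.choose (j - m) n : ℕ) : ℂ) * ((n ! : ℕ) : ℂ) * (((j - m - n)! : ℕ) : ℂ)
      = (((j - m)! : ℕ) : ℂ) := by
    exact_mod_cast congrArg (Nat.cast : ℕ → ℂ) (Nat.choose_mul_factorial_mul_factorial hn)
  have cY2 : ((Nat.choose (j + 1) n : ℕ) : ℂ) * ((n ! : ℕ) : ℂ) * (((j + 1 - n)! : ℕ) : ℂ)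
      = (((j + 1)! : ℕ) : ℂ) := by
    exact_mod_cast congrArg (Nat.cast : ℕ → ℂ)
      (Nat.choose_mul_factorial_mul_factorial (show n ≤ j + 1 by omega))
  have cZ2 : ((Nat.choose (j + 1) (j - m - n) : ℕ) : ℂ) * (((j - m - n)! : ℕ) : ℂ)
      * (((m + 1 + n)! : ℕ) : ℂ) = (((j + 1)! : ℕ) : ℂ) := by
    have h := Nat.choose_mul_factorial_mul_factorial (show j - m - n ≤ j + 1 by omega)
    rw [show j + 1 - (j - m - n) = m + 1 + n by omega] at h
    exact_mod_cast congrArg (Nat.cast : ℕ → ℂ) h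
  have lA : (((j + 1 - n)! : ℕ) : ℂ) = ((j : ℂ) + 1 - n) * (((j - n)! : ℕ) : ℂ) := by
    rw [fact_step (show j + 1 - n = (j - n) + 1 by omega)]
    rw [Nat.cast_sub (show n ≤ j + 1 by omega)]
    push_cast; ring
  have lB : (((j - n)! : ℕ) : ℂ) = ((j : ℂ) - n) * (((j - n - 1)! : ℕ) : ℂ) := by
    rw [fact_step (show j - n = (j - n - 1) + 1 by omega)]
    rw [Nat.cast_sub (show n ≤ j by omega)]
  have lC : (((m + 1 + n)! : ℕ) : ℂ) = ((m : ℂ) + 1 + n) * (((m + n)! : ℕ) : ℂ) := by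
    rw [fact_step (show m + 1 + n = (m + n) + 1 by omega)]
    push_cast; ring
  have lD : (((m + n)! : ℕ) : ℂ) = ((m : ℂ) + n) * (((m + n - 1)! : ℕ) : ℂ) := by
    rw [fact_step (show m + n = (m + n - 1) + 1 by omega)]
    push_cast; ring
  have hP : (((m + n - 1)! : ℕ) : ℂ) * (((j - n - 1)! : ℕ) : ℂ) * ((n ! : ℕ) : ℂ)
      * (((j - m - n)! : ℕ) : ℂ) * (((m + 1 + n)! : ℕ) : ℂ) * (((j + 1 - n)! : ℕ) : ℂ) ≠ 0 :=
    mul_ne_zero (mul_ne_zero (mul_ne_zero (mul_ne_zero (mul_ne_zero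
      (fact_ne' _) (fact_ne' _)) (fact_ne' _)) (fact_ne' _)) (fact_ne' _)) (fact_ne' _)
  apply mul_right_cancel₀ hP
  linear_combination
    (((j:ℂ) - n) * ((j:ℂ) + 1 - n) * (-1:ℂ)^(j-m-n) * (((j - n - 1)! : ℕ) : ℂ) * ((n ! : ℕ) : ℂ)
      * (((j - m - n)! : ℕ) : ℂ) * (((m + 1 + n)! : ℕ) : ℂ) * (((j + 1 - n)! : ℕ) : ℂ)) * e0
    + (((j:ℂ) - n) * ((j:ℂ) + 1 - n) * (-1:ℂ)^(j-m-n) * (-1:ℂ)^n * ((n ! : ℕ) : ℂ)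
      * ((Nat.choose (j + 1) n : ℕ) : ℂ) * (((j - n - 1)! : ℕ) : ℂ) * (((m + 1 + n)! : ℕ) : ℂ)
      * (((j + 1 - n)! : ℕ) : ℂ)) * cY1
    + (((j:ℂ) - n) * ((j:ℂ) + 1 - n) * (-1:ℂ)^(j-m-n) * (-1:ℂ)^n * (((j - m)! : ℕ) : ℂ)
      * (((j - n - 1)! : ℕ) : ℂ) * (((m + 1 + n)! : ℕ) : ℂ)) * cY2
    - (((m:ℂ) + n) * ((m:ℂ) + 1 + n) * (-1:ℂ)^n * (((m + n - 1)! : ℕ) : ℂ) * ((n ! : ℕ) : ℂ)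
      * (((j - m - n)! : ℕ) : ℂ) * (((m + 1 + n)! : ℕ) : ℂ) * (((j + 1 - n)! : ℕ) : ℂ)) * eJ
    - (((m:ℂ) + n) * ((m:ℂ) + 1 + n) * (-1:ℂ)^n * (-1:ℂ)^(j-m-n)
      * ((Nat.choose (j + 1) (j - m - n) : ℕ) : ℂ) * (((m + n - 1)! : ℕ) : ℂ)
      * (((j - m - n)! : ℕ) : ℂ) * (((m + 1 + n)! : ℕ) : ℂ) * (((j + 1 - n)! : ℕ) : ℂ)) * cY1
    - (((m:ℂ) + n) * ((m:ℂ) + 1 + n) * (-1:ℂ)^n * (-1:ℂ)^(j-m-n) * (((j - m)! : ℕ) : ℂ)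
      * (((m + n - 1)! : ℕ) : ℂ) * (((j + 1 - n)! : ℕ) : ℂ)) * cZ2
    + (((j:ℂ) - n) * ((j:ℂ) + 1 - n) * (-1:ℂ)^(j-m-n) * (-1:ℂ)^n * (((j - m)! : ℕ) : ℂ)
      * (((j + 1)! : ℕ) : ℂ) * (((j - n - 1)! : ℕ) : ℂ)) * lC
    + (((j:ℂ) - n) * ((j:ℂ) + 1 - n) * (-1:ℂ)^(j-m-n) * (-1:ℂ)^n * (((j - m)! : ℕ) : ℂ)
      * (((j + 1)! : ℕ) : ℂ) * (((j - n - 1)! : ℕ) : ℂ) * ((m:ℂ) + 1 + n)) * lD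
    - (((m:ℂ) + n) * ((m:ℂ) + 1 + n) * (-1:ℂ)^n * (-1:ℂ)^(j-m-n) * (((j - m)! : ℕ) : ℂ)
      * (((j + 1)! : ℕ) : ℂ) * (((m + n - 1)! : ℕ) : ℂ)) * lA
    - (((m:ℂ) + n) * ((m:ℂ) + 1 + n) * (-1:ℂ)^n * (-1:ℂ)^(j-m-n) * (((j - m)! : ℕ) : ℂ)
      * (((j + 1)! : ℕ) : ℂ) * (((m + n - 1)! : ℕ) : ℂ) * ((j:ℂ) + 1 - n)) * lB

lemma alpha_sym' {j m n : ℕ} (hm : 1 ≤ m) (hjm : m ≤ j) (hn : n ≤ j - m) :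
    ((j : ℂ) - n) * ((j : ℂ) + 1 - n) * alphaCoeff j m n =
      (-1) ^ (j - m) * (((m : ℂ) + n) * ((m : ℂ) + 1 + n) * alphaCoeff j m (j - m - n)) := by
  have h := alpha_sym hm hjm hn
  have hs : (-1 : ℂ) ^ (j - m - n) * (-1) ^ (j - m - n) = 1 := by
    rw [← pow_add]; exact Even.neg_one_pow ⟨j - m - n, rfl⟩
  have hε : (-1 : ℂ) ^ (j - m - n) * (-1) ^ n = (-1) ^ (j - m) := by
    rw [← pow_add]; congr 1; omega
  calc ((j : ℂ) - n) * ((j : ℂ) + 1 - n) * alphaCoeff j m n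
      = ((j : ℂ) - n) * ((j : ℂ) + 1 - n) * alphaCoeff j m n *
          ((-1) ^ (j - m - n) * (-1) ^ (j - m - n)) := by rw [hs]; ring
    _ = (((j : ℂ) - n) * ((j : ℂ) + 1 - n) * alphaCoeff j m n * (-1) ^ (j - m - n)) *
          (-1) ^ (j - m - n) := by ring
    _ = (((m : ℂ) + n) * ((m : ℂ) + 1 + n) * alphaCoeff j m (j - m - n) * (-1) ^ n) *
          (-1) ^ (j - m - n) := by rw [h]
    _ = (-1) ^ (j - m) * (((m : ℂ) + n) * ((m : ℂ) + 1 + n) * alphaCoeff j m (j - m - n)) := by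
          rw [← hε]; ring

lemma alpha_C {j m n : ℕ} (hm : 1 ≤ m) (hjm : m ≤ j) (hn : n ≤ j - m) :
    ((n : ℂ) + 1) * alphaCoeff j m (n + 1) + ((n : ℂ) - j - 1) * alphaCoeff j m n
      + (-1) ^ (j - m) * (((m : ℂ) + 1 + n) * alphaCoeff j m (j - m - n)
          + ((n : ℂ) - ((j : ℂ) - m) - 1) * alphaCoeff j m (j - m - n + 1)) = 0 := by
  have h1 := alpha_rec hm hjm hn
  have h2 := alpha_rec hm hjm (show j - m - n ≤ j - m by omega)
  have hc : ((j - m - n : ℕ) : ℂ) = (j : ℂ) - m - n := by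
    rw [Nat.cast_sub (show n ≤ j - m by omega), Nat.cast_sub hjm]
  rw [hc] at h2
  have h3 := alpha_sym' hm hjm hn
  have hmn : ((m : ℂ) + n) ≠ 0 := by
    have := cast_ne_aux (m + n) (by omega); push_cast at this; exact this
  have hdj : ((j : ℂ) - n) ≠ 0 := by
    have := cast_ne_aux (j - n) (by omega)
    rw [Nat.cast_sub (show n ≤ j by omega)] at this; exact this
  apply mul_left_cancel₀ (mul_ne_zero hmn hdj)
  rw [mul_zero]
  linear_combination ((j : ℂ) - n) * h1 - ((-1 : ℂ) ^ (j - m) * ((m : ℂ) + n)) * h2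
    - (j : ℂ) * h3

end Combinatorics

section KeyPoly

noncomputable def bco (j m n : ℕ) : ℂ := if n ≤ j - m then alphaCoeff j m (j - m - n) else 0
noncomputable def shf (g : ℕ → ℂ) (n : ℕ) : ℂ := if n = 0 then 0 else g (n - 1)

lemma shf_succ (g : ℕ → ℂ) (n : ℕ) : shf g (n + 1) = g n := by simp [shf]

lemma shf_zero (g : ℕ → ℂ) : shf g 0 = 0 := by simp [shf]

lemma mul_S_sum (K : ℕ) (S : ℂ) (f : ℕ → ℂ) (hf : f K = 0) :
    S * ∑ n ∈ Finset.range (K + 1), f n * S ^ n =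
      ∑ n ∈ Finset.range (K + 1), shf f n * S ^ n := by
  rw [Finset.mul_sum]
  conv_rhs => rw [Finset.sum_range_succ']
  rw [Finset.sum_range_succ, hf]
  simp only [shf_succ, shf_zero]
  simp only [zero_mul, mul_zero, add_zero]
  exact Finset.sum_congr rfl (fun k _ => by ring)

lemma sum_cmul (K : ℕ) (S c : ℂ) (f : ℕ → ℂ) :
    c * ∑ n ∈ Finset.range K, f n * S ^ n = ∑ n ∈ Finset.range K, (c * f n) * S ^ n := by
  rw [Finset.mul_sum]; exact Finset.sum_congr rfl (fun k _ => by ring)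

lemma sum_addS (K : ℕ) (S : ℂ) (f g : ℕ → ℂ) :
    (∑ n ∈ Finset.range K, f n * S ^ n) + (∑ n ∈ Finset.range K, g n * S ^ n) =
      ∑ n ∈ Finset.range K, (f n + g n) * S ^ n := by
  rw [← Finset.sum_add_distrib]; exact Finset.sum_congr rfl (fun k _ => by ring)

lemma sum_subS (K : ℕ) (S : ℂ) (f g : ℕ → ℂ) :
    (∑ n ∈ Finset.range K, f n * S ^ n) - (∑ n ∈ Finset.range K, g n * S ^ n) =
      ∑ n ∈ Finset.range K, (f n - g n) * S ^ n := by
  rw [← Finset.sum_sub_distrib]; exact Finset.sum_congr rfl (fun k _ => by ring)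

set_option maxHeartbeats 2000000 in
lemma keyPoly (j m : ℕ) (hm : 1 ≤ m) (hjm : m ≤ j) (S : ℂ) :
    (∑ n ∈ Finset.range (j - m + 1), alphaCoeff j m n * (n : ℂ) * S ^ (n - 1))
      + S * (∑ n ∈ Finset.range (j - m + 1), alphaCoeff j m n * (n : ℂ) * S ^ (n - 1))
      - ((j : ℂ) + 1) * (∑ n ∈ Finset.range (j - m + 1), alphaCoeff j m n * S ^ n)
      + (-1 : ℂ) ^ (j - m) *
        (((m : ℂ) + 1) * (∑ n ∈ Finset.range (j - m + 1), alphaCoeff j m (j - m - n) * S ^ n)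
          + ((m : ℂ) + 1) * (S * (∑ n ∈ Finset.range (j - m + 1), alphaCoeff j m (j - m - n) * S ^ n))
          + S * (∑ n ∈ Finset.range (j - m + 1), alphaCoeff j m (j - m - n) * (n : ℂ) * S ^ (n - 1))
          + S * (S * (∑ n ∈ Finset.range (j - m + 1), alphaCoeff j m (j - m - n) * (n : ℂ) * S ^ (n - 1)))
          - ((j : ℂ) + 1) * (S * (∑ n ∈ Finset.range (j - m + 1), alphaCoeff j m (j - m - n) * S ^ n)))
      = 0 := by
  have hX1 : (∑ n ∈ Finset.range (j - m + 1), alphaCoeff j m n * (n : ℂ) * S ^ (n - 1)) =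
      ∑ n ∈ Finset.range ((j - m + 1) + 1), (((n : ℂ) + 1) * alphaCoeff j m (n + 1)) * S ^ n := by
    conv_lhs => rw [Finset.sum_range_succ']
    conv_rhs => rw [Finset.sum_range_succ, Finset.sum_range_succ]
    rw [alpha_eq_zero (show j - m < j - m + 1 + 1 by omega),
      alpha_eq_zero (show j - m < j - m + 1 by omega)]
    simp only [Nat.cast_zero, mul_zero, zero_mul, add_zero]
    refine Finset.sum_congr rfl (fun k _ => ?_)
    push_cast
    ring
  have hX2 : (∑ n ∈ Finset.range (j - m + 1), alphaCoeff j m n * S ^ n) =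
      ∑ n ∈ Finset.range ((j - m + 1) + 1), alphaCoeff j m n * S ^ n := by
    conv_rhs => rw [Finset.sum_range_succ]
    rw [alpha_eq_zero (show j - m < j - m + 1 by omega)]
    ring
  have hX3 : (∑ n ∈ Finset.range (j - m + 1), alphaCoeff j m (j - m - n) * S ^ n) =
      ∑ n ∈ Finset.range ((j - m + 1) + 1), bco j m n * S ^ n := by
    conv_rhs => rw [Finset.sum_range_succ]
    rw [show bco j m (j - m + 1) = 0 from if_neg (by omega)]
    rw [zero_mul, add_zero]
    refine Finset.sum_congr rfl (fun k hk => ?_)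
    rw [show bco j m k = alphaCoeff j m (j - m - k) from
      if_pos (by have := Finset.mem_range.mp hk; omega)]
  have hX4 : (∑ n ∈ Finset.range (j - m + 1), alphaCoeff j m (j - m - n) * (n : ℂ) * S ^ (n - 1)) =
      ∑ n ∈ Finset.range ((j - m + 1) + 1), (((n : ℂ) + 1) * bco j m (n + 1)) * S ^ n := by
    conv_lhs => rw [Finset.sum_range_succ']
    conv_rhs => rw [Finset.sum_range_succ, Finset.sum_range_succ]
    rw [show bco j m (j - m + 1 + 1) = 0 from if_neg (by omega),
      show bco j m (j - m + 1) = 0 from if_neg (by omega)]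
    simp only [Nat.cast_zero, mul_zero, zero_mul, add_zero]
    refine Finset.sum_congr rfl (fun k hk => ?_)
    rw [show bco j m (k + 1) = alphaCoeff j m (j - m - (k + 1)) from
      if_pos (by have := Finset.mem_range.mp hk; omega)]
    push_cast
    ring
  rw [hX1, hX2, hX3, hX4]
  rw [mul_S_sum (j - m + 1) S _ (by
      rw [alpha_eq_zero (show j - m < (j - m + 1) + 1 by omega)]; ring)]
  rw [mul_S_sum (j - m + 1) S _ (show bco j m (j - m + 1) = 0 from if_neg (by omega))]
  rw [mul_S_sum (j - m + 1) S (fun n => ((n : ℂ) + 1) * bco j m (n + 1)) (by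
      show (((j - m + 1 : ℕ) : ℂ) + 1) * bco j m ((j - m + 1) + 1) = 0
      rw [show bco j m ((j - m + 1) + 1) = 0 from if_neg (by omega)]; ring)]
  rw [mul_S_sum (j - m + 1) S _ (by
      rw [show (j - m + 1) = (j - m) + 1 from rfl, shf_succ]
      show (((j - m : ℕ) : ℂ) + 1) * bco j m ((j - m) + 1) = 0
      rw [show bco j m ((j - m) + 1) = 0 from if_neg (by omega)]; ring)]
  simp only [sum_cmul, sum_addS, sum_subS]
  apply Finset.sum_eq_zero
  intro n hn
  have hn2 := Finset.mem_range.mp hn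
  suffices h : (((n : ℂ) + 1) * alphaCoeff j m (n + 1) + shf (fun k => ((k : ℂ) + 1) * alphaCoeff j m (k + 1)) n
      - ((j : ℂ) + 1) * alphaCoeff j m n
      + (-1 : ℂ) ^ (j - m) * (((m : ℂ) + 1) * bco j m n + ((m : ℂ) + 1) * shf (bco j m) n
        + shf (fun k => ((k : ℂ) + 1) * bco j m (k + 1)) n
        + shf (shf fun k => ((k : ℂ) + 1) * bco j m (k + 1)) n
        - ((j : ℂ) + 1) * shf (bco j m) n)) = 0 by
    rw [h, zero_mul]
  rcases n with _ | k
  · -- n = 0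
    simp only [shf_zero, Nat.cast_zero]
    have hC := alpha_C hm hjm (show 0 ≤ j - m by omega)
    rw [alpha_eq_zero (show j - m < j - m - 0 + 1 by omega)] at hC
    rw [show bco j m 0 = alphaCoeff j m (j - m) from if_pos (by omega)]
    rw [show j - m - 0 = j - m from rfl] at hC
    push_cast at hC
    linear_combination hC
  · simp only [shf_succ]
    by_cases hk : k + 1 ≤ j - m
    · -- 1 ≤ n = k+1 ≤ j - m
      have hC := alpha_C hm hjm hk
      rw [show bco j m (k + 1) = alphaCoeff j m (j - m - (k + 1)) from if_pos hk]
      rw [show bco j m k = alphaCoeff j m (j - m - k) from if_pos (by omega)]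
      rw [show j - m - k = j - m - (k + 1) + 1 by omega]
      rcases k with _ | l
      · -- n = 1
        rw [shf_zero]
        push_cast at hC ⊢
        linear_combination hC
      · -- n = l + 2
        simp only [shf_succ]
        rw [show bco j m (l + 1) = alphaCoeff j m (j - m - (l + 1)) from if_pos (by omega)]
        rw [show j - m - (l + 1) = j - m - (l + 1 + 1) + 1 by omega]
        push_cast at hC ⊢
        linear_combination hC
    · -- n = k + 1 = j - m + 1
      have hk2 : k = j - m := by omega
      rw [alpha_eq_zero (show j - m < k + 1 + 1 by omega),
        alpha_eq_zero (show j - m < k + 1 by omega)]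
      rw [show bco j m (k + 1) = 0 from if_neg (by omega)]
      rw [show bco j m k = alphaCoeff j m (j - m - k) from if_pos (by omega)]
      rw [show j - m - k = 0 by omega]
      rcases k with _ | l
      · -- j = m
        simp only [shf_zero, Nat.cast_zero, Nat.cast_one]
        have hjm2 : j = m := by omega
        subst hjm2
        push_cast
        ring
      · simp only [shf_succ]
        rw [show bco j m (l + 1) = alphaCoeff j m (j - m - (l + 1)) from if_pos (by omega)]
        rw [show j - m - (l + 1) = 0 by omega]
        have hcast : ((l : ℂ) + 1 + 1) = ((j : ℂ) - m) + 1 := by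
          have : ((l + 2 : ℕ) : ℂ) = ((j - m + 1 : ℕ) : ℂ) := by rw [show l + 2 = j - m + 1 by omega]
          push_cast [Nat.cast_sub hjm] at this
          linear_combination this
        push_cast
        linear_combination ((-1 : ℂ) ^ (j - m) * alphaCoeff j m 0) * hcast

end KeyPoly

section Analytic

variable {u : (Fin 3 → ℝ) → ℂ}

lemma pd_smooth (hu : ContDiff ℝ (⊤ : ℕ∞) u) (μ : Fin 3) : ContDiff ℝ (⊤ : ℕ∞) (pd μ u) := by
  have h1 : ContDiff ℝ (⊤ : ℕ∞) (fderiv ℝ u) := hu.fderiv_right (by simp)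
  exact h1.clm_apply contDiff_const

lemma conj_smooth (hu : ContDiff ℝ (⊤ : ℕ∞) u) : ContDiff ℝ (⊤ : ℕ∞) (fun y => conj (u y)) :=
  Complex.conjCLE.contDiff.comp hu

lemma pd_const_mul {f : (Fin 3 → ℝ) → ℂ} {x : Fin 3 → ℝ} {μ : Fin 3} (c : ℂ)
    (hf : DifferentiableAt ℝ f x) :
    pd μ (fun y => c * f y) x = c * pd μ f x := by
  rw [pd_mul (differentiableAt_const c) hf, pd_const]
  ring

lemma conserved_master (hu : ContDiff ℝ (⊤ : ℕ∞) u) (hbox : ∀ x, dalembert u x = 0)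
    (hnull : ∀ x, minkGrad u u x = 0) (F G aF bF aG bG : (Fin 3 → ℝ) → ℂ)
    (hF : HasPD u F aF bF) (hG : HasPD u G aG bG)
    (hbc : ∀ x, bF x + aG x = 0) :
    IsConservedCurrent (fun μ x => F x * pd μ u x + G x * pd μ (fun y => conj (u y)) x) := by
  intro x
  have hu' : Differentiable ℝ u := hu.differentiable (by simp)
  have hpdiff : ∀ ν : Fin 3, Differentiable ℝ (pd ν u) :=
    fun ν => (pd_smooth hu ν).differentiable (by simp)
  have hubdiff : ∀ ν : Fin 3, Differentiable ℝ (pd ν (fun y => conj (u y))) :=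
    fun ν => (pd_smooth (conj_smooth hu) ν).differentiable (by simp)
  have hpdconj : ∀ ν : Fin 3, pd ν (fun y => conj (u y)) = fun y => conj (pd ν u y) :=
    fun ν => funext fun y => pd_conj (hu' y)
  have hcalc : ∀ ν : Fin 3,
      pd ν (fun y => F y * pd ν u y + G y * pd ν (fun z => conj (u z)) y) x =
        (aF x * pd ν u x + bF x * conj (pd ν u x)) * pd ν u x + F x * pd ν (pd ν u) x
          + (aG x * pd ν u x + bG x * conj (pd ν u x)) * conj (pd ν u x)
          + G x * conj (pd ν (pd ν u) x) := by
    intro ν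
    rw [pd_add ((hF.diff x).fun_mul ((hpdiff ν) x)) ((hG.diff x).fun_mul ((hubdiff ν) x))]
    rw [pd_mul (hF.diff x) ((hpdiff ν) x), pd_mul (hG.diff x) ((hubdiff ν) x)]
    rw [hF.2 ν x, hG.2 ν x]
    rw [hpdconj ν]
    rw [pd_conj ((hpdiff ν) x)]
    beta_reduce
    ring
  show pd 0 (fun y => F y * pd 0 u y + G y * pd 0 (fun z => conj (u z)) y) x
      - pd 1 (fun y => F y * pd 1 u y + G y * pd 1 (fun z => conj (u z)) y) x
      - pd 2 (fun y => F y * pd 2 u y + G y * pd 2 (fun z => conj (u z)) y) x = 0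
  rw [hcalc 0, hcalc 1, hcalc 2]
  have h1 : pd 0 u x * pd 0 u x - pd 1 u x * pd 1 u x - pd 2 u x * pd 2 u x = 0 := by
    have := hnull x; unfold minkGrad at this; exact this
  have h2 : conj (pd 0 u x) * conj (pd 0 u x) - conj (pd 1 u x) * conj (pd 1 u x)
      - conj (pd 2 u x) * conj (pd 2 u x) = 0 := by
    have := congrArg (starRingEnd ℂ) h1
    simpa [map_sub, map_mul] using this
  have h3 : pd 0 (pd 0 u) x - pd 1 (pd 1 u) x - pd 2 (pd 2 u) x = 0 := by
    have := hbox x; unfold dalembert at this; exact this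
  have h4 : conj (pd 0 (pd 0 u) x) - conj (pd 1 (pd 1 u) x) - conj (pd 2 (pd 2 u) x) = 0 := by
    have := congrArg (starRingEnd ℂ) h3
    simpa [map_sub] using this
  have h5 := hbc x
  linear_combination aF x * h1 + bG x * h2 + F x * h3 + G x * h4
    + (pd 0 u x * conj (pd 0 u x) - pd 1 u x * conj (pd 1 u x)
        - pd 2 u x * conj (pd 2 u x)) * h5

end Analytic


set_option maxHeartbeats 4000000 in
/-- For a solution of the `CP¹` submodel `□u = 0`, `⟨∂u,∂u⟩ = 0`, the current
`J_μ^{(j,−m)} = (−1)^m conj(J_μ^{(j,m)})` is conserved for all `j ≥ m ≥ 1`. -/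
theorem cp1_submodel_Jjm_neg_conserved (u : (Fin 3 → ℝ) → ℂ) (hu : ContDiff ℝ (⊤ : ℕ∞) u)
    (hbox : ∀ x, dalembert u x = 0) (hnull : ∀ x, minkGrad u u x = 0)
    (j m : ℕ) (hm : 1 ≤ m) (hjm : m ≤ j) :
    IsConservedCurrent (fun μ x => (-1) ^ m * conj (Jjm u j m μ x)) := by
  have hu' : Differentiable ℝ u := hu.differentiable (by simp)
  set cc : ℂ :=
    ((Real.sqrt (((j + m)! : ℝ) / ((j : ℝ) * ((j : ℝ) + 1) * ((j - m)! : ℝ))) : ℝ) : ℂ) with hccdef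
  -- nonvanishing of 1 + |u|^2
  have hPne : ∀ y, (1 + u y * conj (u y)) ≠ 0 := by
    intro y hcon
    rw [Complex.mul_conj (u y)] at hcon
    have h2 := congrArg Complex.re hcon
    simp only [Complex.add_re, Complex.one_re, Complex.ofReal_re, Complex.zero_re] at h2
    have := Complex.normSq_nonneg (u y)
    linarith
  -- basic HasPD pieces
  have h_self := hasPD_self hu'
  have h_conj := hasPD_conj hu'
  have h_s : HasPD u (fun y => u y * conj (u y)) (fun y => conj (u y)) (fun y => u y) := by
    refine (h_self.mul h_conj).congr_ab ?_ ?_ <;> intro y <;> beta_reduce <;> ring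
  have h_P : HasPD u (fun y => 1 + u y * conj (u y)) (fun y => conj (u y)) (fun y => u y) := by
    refine ((hasPD_const 1).add h_s).congr_ab ?_ ?_ <;> intro y <;> beta_reduce <;> ring
  have h_Ppow : HasPD u (fun y => (1 + u y * conj (u y)) ^ (j + 1))
      (fun y => ((j + 1 : ℕ) : ℂ) * (1 + u y * conj (u y)) ^ j * conj (u y))
      (fun y => ((j + 1 : ℕ) : ℂ) * (1 + u y * conj (u y)) ^ j * u y) := by
    refine (h_P.pow (j + 1)).congr_ab ?_ ?_ <;> intro y <;> beta_reduce <;>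
      simp only [Nat.add_sub_cancel]
  have h_Pinv : HasPD u (fun y => ((1 + u y * conj (u y)) ^ (j + 1))⁻¹)
      (fun y => -(((j + 1 : ℕ) : ℂ) * (1 + u y * conj (u y)) ^ j * conj (u y)) *
        (((1 + u y * conj (u y)) ^ (j + 1))⁻¹ * ((1 + u y * conj (u y)) ^ (j + 1))⁻¹))
      (fun y => -(((j + 1 : ℕ) : ℂ) * (1 + u y * conj (u y)) ^ j * u y) *
        (((1 + u y * conj (u y)) ^ (j + 1))⁻¹ * ((1 + u y * conj (u y)) ^ (j + 1))⁻¹)) := by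
    refine (h_Ppow.inv (fun y => pow_ne_zero _ (hPne y))).congr_ab ?_ ?_ <;> intro y <;>
      beta_reduce <;>
      rw [div_eq_mul_inv, pow_two, mul_inv] <;> ring
  have h_t1 : HasPD u (fun y => (-Complex.I * u y) ^ (m - 1))
      (fun y => ((m - 1 : ℕ) : ℂ) * (-Complex.I * u y) ^ (m - 1 - 1) * -Complex.I)
      (fun _ => 0) := by
    refine ((h_self.const_mul (-Complex.I)).pow (m - 1)).congr_ab ?_ ?_ <;> intro y <;>
      beta_reduce <;> ring
  have h_A : HasPD u
      (fun y => ∑ n ∈ Finset.range (j - m + 1), alphaCoeff j m n * (u y * conj (u y)) ^ n)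
      (fun y => (∑ n ∈ Finset.range (j - m + 1),
          alphaCoeff j m n * (n : ℂ) * (u y * conj (u y)) ^ (n - 1)) * conj (u y))
      (fun y => (∑ n ∈ Finset.range (j - m + 1),
          alphaCoeff j m n * (n : ℂ) * (u y * conj (u y)) ^ (n - 1)) * u y) := by
    have hterm : ∀ n ∈ Finset.range (j - m + 1), HasPD u
        (fun y => alphaCoeff j m n * (u y * conj (u y)) ^ n)
        (fun y => alphaCoeff j m n * (n : ℂ) * (u y * conj (u y)) ^ (n - 1) * conj (u y))
        (fun y => alphaCoeff j m n * (n : ℂ) * (u y * conj (u y)) ^ (n - 1) * u y) := by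
      intro n _
      refine ((h_s.pow n).const_mul (alphaCoeff j m n)).congr_ab ?_ ?_ <;> intro y <;>
        beta_reduce <;> ring
    refine (HasPD.sum (Finset.range (j - m + 1)) _ _ _ hterm).congr_ab ?_ ?_ <;> intro y <;>
      rw [Finset.sum_mul]
  have h_B : HasPD u
      (fun y => ∑ n ∈ Finset.range (j - m + 1), alphaCoeff j m (j - m - n) * (u y * conj (u y)) ^ n)
      (fun y => (∑ n ∈ Finset.range (j - m + 1),
          alphaCoeff j m (j - m - n) * (n : ℂ) * (u y * conj (u y)) ^ (n - 1)) * conj (u y))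
      (fun y => (∑ n ∈ Finset.range (j - m + 1),
          alphaCoeff j m (j - m - n) * (n : ℂ) * (u y * conj (u y)) ^ (n - 1)) * u y) := by
    have hterm : ∀ n ∈ Finset.range (j - m + 1), HasPD u
        (fun y => alphaCoeff j m (j - m - n) * (u y * conj (u y)) ^ n)
        (fun y => alphaCoeff j m (j - m - n) * (n : ℂ) * (u y * conj (u y)) ^ (n - 1) * conj (u y))
        (fun y => alphaCoeff j m (j - m - n) * (n : ℂ) * (u y * conj (u y)) ^ (n - 1) * u y) := by
      intro n _
      refine ((h_s.pow n).const_mul (alphaCoeff j m (j - m - n))).congr_ab ?_ ?_ <;> intro y <;>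
        beta_reduce <;> ring
    refine (HasPD.sum (Finset.range (j - m + 1)) _ _ _ hterm).congr_ab ?_ ?_ <;> intro y <;>
      rw [Finset.sum_mul]
  have h_u2 : HasPD u (fun y => u y ^ 2) (fun y => 2 * u y) (fun _ => 0) := by
    refine (h_self.pow 2).congr_ab ?_ ?_ <;> intro y <;> beta_reduce <;> push_cast <;> norm_num
  -- assemble F and G
  have hF := (((hasPD_const (u := u) cc).mul h_t1).mul h_Pinv).mul h_A
  have hG := (((hasPD_const (u := u) cc).mul h_t1).mul h_Pinv).mul
    (((hasPD_const (u := u) ((-1 : ℂ) ^ (j - m))).mul h_B).mul h_u2)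
  have hcons := conserved_master hu hbox hnull _ _ _ _ _ _ hF hG ?hbc
  case hbc =>
    intro x
    beta_reduce
    set V := u x with hV
    set W := (starRingEnd ℂ) V with hW
    set Ax := ∑ n ∈ Finset.range (j - m + 1), alphaCoeff j m n * (V * W) ^ n with hAx
    set A'x := ∑ n ∈ Finset.range (j - m + 1),
      alphaCoeff j m n * (n : ℂ) * (V * W) ^ (n - 1) with hA'x
    set Bx := ∑ n ∈ Finset.range (j - m + 1),
      alphaCoeff j m (j - m - n) * (V * W) ^ n with hBx
    set B'x := ∑ n ∈ Finset.range (j - m + 1),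
      alphaCoeff j m (j - m - n) * (n : ℂ) * (V * W) ^ (n - 1) with hB'x
    have hkey := keyPoly j m hm hjm (V * W)
    rw [← hAx, ← hA'x, ← hBx, ← hB'x] at hkey
    have hP0 : (1 + V * W) ≠ 0 := hPne x
    have ht2 : ((1 + V * W) ^ (j + 1))⁻¹ * (1 + V * W) ^ (j + 1) = 1 :=
      inv_mul_cancel₀ (pow_ne_zero _ hP0)
    have hTT : ((m : ℂ) - 1) * (-Complex.I * V) ^ (m - 1 - 1) * (-Complex.I * V) =
        ((m : ℂ) - 1) * (-Complex.I * V) ^ (m - 1) := by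
      rcases m with _ | k
      · omega
      rcases k with _ | l
      · norm_num
      · simp only [Nat.add_sub_cancel]
        push_cast
        ring
    push_cast [Nat.cast_sub hm]
    apply mul_right_cancel₀ (mul_ne_zero (pow_ne_zero (j + 1) hP0)
      (mul_ne_zero (pow_ne_zero (j + 1) hP0) hP0))
    linear_combination
      (cc * (-Complex.I * V) ^ (m - 1) * V * (1 + V * W) ^ (j + 1)) * hkey
      + ( (-(cc * (-Complex.I * V) ^ (m - 1) * ((j : ℂ) + 1) * (1 + V * W) ^ j * V * Ax * (1 + V * W))
            - cc * (-Complex.I * V) ^ (m - 1) * ((j : ℂ) + 1) * (-1 : ℂ) ^ (j - m) * Bx * V ^ 2 * W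
              * (1 + V * W) ^ j * (1 + V * W))
          * (((1 + V * W) ^ (j + 1))⁻¹ * (1 + V * W) ^ (j + 1) + 1)
        + cc * (-Complex.I * V) ^ (m - 1) * A'x * V * (1 + V * W) ^ (j + 1) * (1 + V * W)
        + cc * ((m : ℂ) - 1) * (-Complex.I * V) ^ (m - 1 - 1) * (-Complex.I) * (-1 : ℂ) ^ (j - m)
            * Bx * V ^ 2 * (1 + V * W) * (1 + V * W) ^ (j + 1)
        + cc * (-Complex.I * V) ^ (m - 1) * (-1 : ℂ) ^ (j - m) * (B'x * W * V ^ 2 + 2 * Bx * V)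
            * (1 + V * W) * (1 + V * W) ^ (j + 1) ) * ht2
      + (cc * (-1 : ℂ) ^ (j - m) * Bx * V * (1 + V * W) * (1 + V * W) ^ (j + 1)) * hTT
  · -- transfer conservation to the stated current
    intro x
    have hpds : ∀ ν : Fin 3, Differentiable ℝ (pd ν u) :=
      fun ν => (pd_smooth hu ν).differentiable (by simp)
    have hpdsc : ∀ ν : Fin 3, Differentiable ℝ (pd ν (fun y => conj (u y))) :=
      fun ν => (pd_smooth (conj_smooth hu) ν).differentiable (by simp)
    have hJeq : ∀ (ν : Fin 3) (y : Fin 3 → ℝ), Jjm u j m ν y =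
        (cc * (-Complex.I * u y) ^ (m - 1) * ((1 + u y * conj (u y)) ^ (j + 1))⁻¹ *
          ∑ n ∈ Finset.range (j - m + 1), alphaCoeff j m n * (u y * conj (u y)) ^ n) * pd ν u y
        + (cc * (-Complex.I * u y) ^ (m - 1) * ((1 + u y * conj (u y)) ^ (j + 1))⁻¹ *
          (((-1) ^ (j - m) * ∑ n ∈ Finset.range (j - m + 1),
              alphaCoeff j m (j - m - n) * (u y * conj (u y)) ^ n) * u y ^ 2)) *
            pd ν (fun z => conj (u z)) y := by
      intro ν y
      unfold Jjm
      rw [hccdef]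
      rw [← Finset.sum_mul, ← Finset.sum_mul, ← Finset.sum_mul]
      ring
    have hJdiff : ∀ ν : Fin 3, Differentiable ℝ (fun y =>
        (cc * (-Complex.I * u y) ^ (m - 1) * ((1 + u y * conj (u y)) ^ (j + 1))⁻¹ *
          ∑ n ∈ Finset.range (j - m + 1), alphaCoeff j m n * (u y * conj (u y)) ^ n) * pd ν u y
        + (cc * (-Complex.I * u y) ^ (m - 1) * ((1 + u y * conj (u y)) ^ (j + 1))⁻¹ *
          (((-1) ^ (j - m) * ∑ n ∈ Finset.range (j - m + 1),
              alphaCoeff j m (j - m - n) * (u y * conj (u y)) ^ n) * u y ^ 2)) *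
            pd ν (fun z => conj (u z)) y) :=
      fun ν => (hF.diff.mul (hpds ν)).add (hG.diff.mul (hpdsc ν))
    show pd 0 (fun y => (-1) ^ m * conj (Jjm u j m 0 y)) x
        - pd 1 (fun y => (-1) ^ m * conj (Jjm u j m 1 y)) x
        - pd 2 (fun y => (-1) ^ m * conj (Jjm u j m 2 y)) x = 0
    simp only [hJeq]
    rw [pd_const_mul _ ((hJdiff 0).conj_comp x), pd_const_mul _ ((hJdiff 1).conj_comp x),
      pd_const_mul _ ((hJdiff 2).conj_comp x)]
    rw [pd_conj ((hJdiff 0) x), pd_conj ((hJdiff 1) x), pd_conj ((hJdiff 2) x)]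
    have hdiv := hcons x
    beta_reduce at hdiv
    have hc := congrArg (starRingEnd ℂ) hdiv
    simp only [map_sub, map_zero] at hc
    linear_combination ((-1 : ℂ) ^ m) * hc
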